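/- arXiv:2306.08752 — 3 statements merged into one kernel-verified Lean document; each statement's English description precedes it below -/
import Mathlib

section
/- Let a2, gamma, alpha, betastar, k, c, h, sigma2, sigma3 > 0 and epsilon > 0. For x, S, I > 0 set beta(S,I) = betastar/(S + I + k) and P = epsilon*S + I. Then: ( epsilon*( S*(a2 - (1/(c + x) + h)*(S + I)) - beta(S,I)*S*I + gamma*I ) + beta(S,I)*S*I - alpha*I ) / P - ( epsilon^2*sigma2^2*S^2 + sigma3^2*I^2 ) / (2*P^2) <= epsilon*max{|betastar - gamma|, gamma} + max{betastar - alpha, a2} - 1/(2*(1/sigma2^2 + 1/sigma3^2)). -/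
/-!
The drift numerator is bounded by `(ε K + M) (ε S + I)` term by term: the competition term is
nonpositive, `β S / (S + I + k) ≤ β*`, and every remaining coefficient is dominated by
`K = max |β* - γ| γ` or `M = max (β* - α) a₂`. The noise term is bounded below by the weighted
Cauchy–Schwarz inequality `(a + b)² ≤ (1/p² + 1/q²) (p² a² + q² b²)`.
-/

lemma div_add_mul_le_self {β S I k : ℝ} (hβ : 0 ≤ β) (hS : 0 ≤ S) (hI : 0 ≤ I) (hk : 0 < k) :
    β / (S + I + k) * S ≤ β := by
  rw [div_mul_eq_mul_div, div_le_iff₀ (by positivity)]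
  nlinarith [mul_nonneg hβ hI, mul_nonneg hβ hk.le]

lemma add_sq_le_inv_sq_add_inv_sq_mul {p q : ℝ} (hp : p ≠ 0) (hq : q ≠ 0) (a b : ℝ) :
    (a + b) ^ 2 ≤ (1 / p ^ 2 + 1 / q ^ 2) * (p ^ 2 * a ^ 2 + q ^ 2 * b ^ 2) := by
  have key : (1 / p ^ 2 + 1 / q ^ 2) * (p ^ 2 * a ^ 2 + q ^ 2 * b ^ 2) - (a + b) ^ 2
      = (q / p * b - p / q * a) ^ 2 := by
    field_simp
    ring
  linarith [sq_nonneg (q / p * b - p / q * a)]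

lemma one_div_two_mul_inv_sq_add_le {p q : ℝ} (hp : p ≠ 0) (hq : q ≠ 0) {a b : ℝ}
    (hab : a + b ≠ 0) :
    1 / (2 * (1 / p ^ 2 + 1 / q ^ 2)) ≤ (p ^ 2 * a ^ 2 + q ^ 2 * b ^ 2) / (2 * (a + b) ^ 2) := by
  rw [div_le_div_iff₀ (by positivity) (by positivity)]
  nlinarith [add_sq_le_inv_sq_add_inv_sq_mul hp hq a b]

lemma drift_numerator_le {ε S I d B β γ α a : ℝ} (hε : 0 ≤ ε) (hS : 0 ≤ S) (hI : 0 ≤ I)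
    (hd : 0 ≤ d) (hB₀ : 0 ≤ B) (hB : B ≤ β) :
    ε * (S * (a - d) - B * I + γ * I) + B * I - α * I
      ≤ (ε * max |β - γ| γ + max (β - α) a) * (ε * S + I) := by
  have hK₀ : 0 ≤ max |β - γ| γ := le_max_of_le_left (abs_nonneg _)
  have hγK : γ ≤ max |β - γ| γ := le_max_right _ _
  have haM : a ≤ max (β - α) a := le_max_right _ _
  have hβM : β - α ≤ max (β - α) a := le_max_left _ _
  linarith [mul_nonneg (mul_nonneg hε hS) (sub_nonneg.2 haM), mul_nonneg (mul_nonneg hε hS) hd,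
    mul_nonneg (mul_nonneg hε hI) (sub_nonneg.2 hγK), mul_nonneg (mul_nonneg hε hI) hB₀,
    mul_nonneg hI (sub_nonneg.2 hβM), mul_nonneg hI (sub_nonneg.2 hB),
    mul_nonneg (mul_nonneg (mul_nonneg hε hK₀) hε) hS]

theorem stmt_7_general (a2 gamma alpha betastar k c h sigma2 sigma3 epsilon : ℝ)
    (hbetastar : 0 < betastar) (hk : 0 < k) (hc : 0 < c) (hh : 0 < h)
    (hsigma2 : 0 < sigma2) (hsigma3 : 0 < sigma3) (hepsilon : 0 < epsilon) :
    ∀ x S I : ℝ, 0 < x → 0 < S → 0 < I →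
      (epsilon * (S * (a2 - (1 / (c + x) + h) * (S + I))
          - (betastar / (S + I + k)) * S * I + gamma * I)
        + (betastar / (S + I + k)) * S * I - alpha * I) / (epsilon * S + I)
      - (epsilon ^ 2 * sigma2 ^ 2 * S ^ 2 + sigma3 ^ 2 * I ^ 2)
          / (2 * (epsilon * S + I) ^ 2)
      ≤ epsilon * max |betastar - gamma| gamma + max (betastar - alpha) a2
          - 1 / (2 * (1 / sigma2 ^ 2 + 1 / sigma3 ^ 2)) := by
  intro x S I hx hS hI
  have hP : 0 < epsilon * S + I := by positivity
  have hβS := div_add_mul_le_self hbetastar.le hS.le hI.le hk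
  have drift := (div_le_iff₀ hP).2 <| drift_numerator_le (γ := gamma) (α := alpha) (a := a2)
    hepsilon.le hS.le hI.le (by positivity : 0 ≤ (1 / (c + x) + h) * (S + I)) (by positivity) hβS
  have noise := one_div_two_mul_inv_sq_add_le hsigma2.ne' hsigma3.ne' hP.ne'
  rw [show sigma2 ^ 2 * (epsilon * S) ^ 2 = epsilon ^ 2 * sigma2 ^ 2 * S ^ 2 by ring] at noise
  linarith

theorem stmt_7 (a2 gamma alpha betastar k c h sigma2 sigma3 epsilon : ℝ)
    (ha2 : 0 < a2) (hgamma : 0 < gamma) (halpha : 0 < alpha)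
    (hbetastar : 0 < betastar) (hk : 0 < k) (hc : 0 < c) (hh : 0 < h)
    (hsigma2 : 0 < sigma2) (hsigma3 : 0 < sigma3) (hepsilon : 0 < epsilon) :
    ∀ x S I : ℝ, 0 < x → 0 < S → 0 < I →
      (epsilon * (S * (a2 - (1 / (c + x) + h) * (S + I))
          - (betastar / (S + I + k)) * S * I + gamma * I)
        + (betastar / (S + I + k)) * S * I - alpha * I) / (epsilon * S + I)
      - (epsilon ^ 2 * sigma2 ^ 2 * S ^ 2 + sigma3 ^ 2 * I ^ 2)
          / (2 * (epsilon * S + I) ^ 2)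
      ≤ epsilon * max |betastar - gamma| gamma + max (betastar - alpha) a2
          - 1 / (2 * (1 / sigma2 ^ 2 + 1 / sigma3 ^ 2)) :=
  stmt_7_general a2 gamma alpha betastar k c h sigma2 sigma3 epsilon hbetastar hk hc hh hsigma2
    hsigma3 hepsilon
end

section
/- Let x : [0,∞) → (0,∞) be continuous, let lambda > 0, mu > 0, T >= 0, and let phi : [0,∞) → ℝ be a function with lim_{t→∞} phi(t)/t = 0. If ln x(t) <= lambda*t - mu*∫₀ᵗ x(s) ds + phi(t) for all t >= T, then limsup_{t→∞} (1/t)*∫₀ᵗ x(s) ds <= lambda/mu. -/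
open Filter Real

theorem stmt_10 (x : ℝ → ℝ) (hx : ContinuousOn x (Set.Ici 0))
    (hxpos : ∀ t : ℝ, 0 ≤ t → 0 < x t)
    (lam mu T : ℝ) (hlam : 0 < lam) (hmu : 0 < mu) (hT : 0 ≤ T)
    (phi : ℝ → ℝ) (hphi : Filter.Tendsto (fun t => phi t / t) Filter.atTop (nhds 0))
    (h : ∀ t : ℝ, T ≤ t →
      Real.log (x t) ≤ lam * t - mu * (∫ s in (0:ℝ)..t, x s) + phi t) :
    Filter.limsup (fun t => (1 / t) * ∫ s in (0:ℝ)..t, x s) Filter.atTop ≤ lam / mu := by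
  set X : ℝ → ℝ := fun t => ∫ s in (0:ℝ)..t, x s with hXdef
  set f : ℝ → ℝ := fun t => (1 / t) * X t with hfdef
  -- derivative of X
  have hXderiv : ∀ t : ℝ, 0 < t → HasDerivAt X (x t) t := by
    intro t ht
    have hmem : Set.Ici (0:ℝ) ∈ nhds t := Ici_mem_nhds ht
    have hcont : ContinuousAt x t := hx.continuousAt hmem
    have hint : IntervalIntegrable x MeasureTheory.volume 0 t := by
      apply ContinuousOn.intervalIntegrable
      apply hx.mono
      rw [Set.uIcc_of_le ht.le]
      exact fun s hs => hs.1
    exact intervalIntegral.integral_hasDerivAt_right hint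
      ⟨Set.Ici 0, hmem, hx.aestronglyMeasurable measurableSet_Ici⟩ hcont
  have hXnonneg : ∀ t : ℝ, 0 ≤ t → 0 ≤ X t := by
    intro t ht
    apply intervalIntegral.integral_nonneg ht
    intro s hs; exact (hxpos s hs.1).le
  -- f is eventually nonneg
  have hfnonneg : ∀ᶠ t in atTop, (0:ℝ) ≤ f t := by
    filter_upwards [eventually_ge_atTop (1:ℝ)] with t ht
    have ht0 : (0:ℝ) < t := lt_of_lt_of_le one_pos ht
    exact mul_nonneg (by positivity) (hXnonneg t ht0.le)
  have key : ∀ ε : ℝ, 0 < ε →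
      Filter.limsup f Filter.atTop ≤ (lam + ε) / mu := by
    intro ε hε
    obtain ⟨t₀, ht₀⟩ := eventually_atTop.mp (hphi.eventually_lt_const hε)
    set T₁ : ℝ := max T (max t₀ 1) with hT₁def
    have hT₁pos : (0:ℝ) < T₁ := lt_of_lt_of_le one_pos (le_max_of_le_right (le_max_right _ _))
    set k : ℝ := lam + ε with hkdef
    have hk : 0 < k := by positivity
    set A : ℝ := mu / k with hAdef
    have hA : 0 < A := by positivity
    set C : ℝ := Real.exp (mu * X T₁) - A * Real.exp (k * T₁) with hCdef
    set H : ℝ → ℝ := fun t => A * Real.exp (k * t) - Real.exp (mu * X t) with hHdef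
    have hHderiv : ∀ t : ℝ, 0 < t →
        HasDerivAt H (mu * Real.exp (k * t) - Real.exp (mu * X t) * (mu * x t)) t := by
      intro t ht
      have h1 : HasDerivAt (fun t => A * Real.exp (k * t)) (A * (Real.exp (k * t) * k)) t := by
        simpa using ((hasDerivAt_id t).const_mul k).exp.const_mul A
      have h2 : HasDerivAt (fun t => Real.exp (mu * X t)) (Real.exp (mu * X t) * (mu * x t)) t :=
        ((hXderiv t ht).const_mul mu).exp
      have := h1.sub h2
      refine this.congr_deriv ?_
      rw [hAdef]
      field_simp
    have hHmono : MonotoneOn H (Set.Ici T₁) := by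
      apply monotoneOn_of_deriv_nonneg (convex_Ici T₁)
      · intro t ht
        exact (hHderiv t (lt_of_lt_of_le hT₁pos ht)).continuousAt.continuousWithinAt
      · intro t ht
        rw [interior_Ici] at ht
        exact (hHderiv t (lt_trans hT₁pos ht)).differentiableAt.differentiableWithinAt
      · intro t ht
        rw [interior_Ici] at ht
        have htpos : 0 < t := lt_trans hT₁pos ht
        rw [(hHderiv t htpos).deriv]
        -- show x t * exp (mu * X t) ≤ exp (k * t)
        have hphit : phi t ≤ ε * t := by
          have := ht₀ t (le_trans (le_max_of_le_right (le_max_left _ _)) ht.le)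
          have := (div_lt_iff₀ htpos).mp this
          linarith
        have hlog : Real.log (x t) ≤ k * t - mu * X t := by
          have := h t (le_trans (le_max_left _ _) ht.le)
          rw [hkdef]; nlinarith
        have hxle : x t ≤ Real.exp (k * t - mu * X t) := by
          calc x t = Real.exp (Real.log (x t)) := (Real.exp_log (hxpos t htpos.le)).symm
          _ ≤ Real.exp (k * t - mu * X t) := Real.exp_le_exp.mpr hlog
        have : Real.exp (mu * X t) * x t ≤ Real.exp (k * t) := by
          calc Real.exp (mu * X t) * x t ≤ Real.exp (mu * X t) * Real.exp (k * t - mu * X t) := by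
                exact mul_le_mul_of_nonneg_left hxle (Real.exp_pos _).le
          _ = Real.exp (k * t) := by rw [← Real.exp_add]; ring_nf
        nlinarith [hmu.le]
    -- bound: for t ≥ T₁, exp (mu * X t) ≤ A * exp (k t) + C
    have hbound : ∀ t : ℝ, T₁ ≤ t → Real.exp (mu * X t) ≤ A * Real.exp (k * t) + C := by
      intro t ht
      have := hHmono (Set.self_mem_Ici) (Set.mem_Ici.mpr ht) ht
      simp only [hHdef, hCdef] at this ⊢
      linarith
    -- the comparison function
    set g : ℝ → ℝ := fun t => Real.log (A * Real.exp (k * t) + C) / (mu * t) with hgdef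
    have hfg : ∀ᶠ t in atTop, f t ≤ g t := by
      filter_upwards [eventually_ge_atTop T₁] with t ht
      have htpos : 0 < t := lt_of_lt_of_le hT₁pos ht
      have h1 : mu * X t ≤ Real.log (A * Real.exp (k * t) + C) := by
        calc mu * X t = Real.log (Real.exp (mu * X t)) := (Real.log_exp _).symm
        _ ≤ Real.log (A * Real.exp (k * t) + C) :=
            Real.log_le_log (Real.exp_pos _) (hbound t ht)
      show 1 / t * X t ≤ Real.log (A * Real.exp (k * t) + C) / (mu * t)
      rw [one_div]
      calc t⁻¹ * X t ≤ t⁻¹ * (Real.log (A * Real.exp (k * t) + C) / mu) := by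
            apply mul_le_mul_of_nonneg_left _ (by positivity)
            rw [le_div_iff₀ hmu]; linarith
      _ = Real.log (A * Real.exp (k * t) + C) / (mu * t) := by
            rw [div_eq_mul_inv, div_eq_mul_inv, mul_inv]; ring
    -- tendsto of g
    have hgpos : ∀ t : ℝ, T₁ ≤ t → 0 < A + C * Real.exp (-(k * t)) := by
      intro t ht
      have h1 : 0 < A * Real.exp (k * t) + C :=
        lt_of_lt_of_le (Real.exp_pos _) (hbound t ht)
      have : (A * Real.exp (k * t) + C) * Real.exp (-(k * t)) > 0 :=
        mul_pos h1 (Real.exp_pos _)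
      calc (0:ℝ) < (A * Real.exp (k * t) + C) * Real.exp (-(k * t)) := this
      _ = A + C * Real.exp (-(k * t)) := by
          rw [add_mul, mul_assoc, ← Real.exp_add]; simp
    have hgcong : ∀ᶠ t in atTop,
        g t = k / mu + Real.log (A + C * Real.exp (-(k * t))) * (mu * t)⁻¹ := by
      filter_upwards [eventually_ge_atTop T₁] with t ht
      have htpos : 0 < t := lt_of_lt_of_le hT₁pos ht
      have h2 : A * Real.exp (k * t) + C = Real.exp (k * t) * (A + C * Real.exp (-(k * t))) := by
        have he : Real.exp (k * t) * Real.exp (-(k * t)) = 1 := by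
          rw [← Real.exp_add]; simp
        linear_combination (-C) * he
      rw [hgdef]
      simp only
      rw [h2, Real.log_mul (Real.exp_ne_zero _) (ne_of_gt (hgpos t ht)), Real.log_exp]
      have hmt : mu * t ≠ 0 := by positivity
      field_simp
    have hL : Tendsto (fun t => Real.log (A + C * Real.exp (-(k * t)))) atTop
        (nhds (Real.log A)) := by
      have h1 : Tendsto (fun t : ℝ => A + C * Real.exp (-(k * t))) atTop (nhds A) := by
        have h2 : Tendsto (fun t : ℝ => Real.exp (-(k * t))) atTop (nhds 0) := by
          apply Real.tendsto_exp_atBot.comp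
          exact tendsto_neg_atBot_iff.mpr ((tendsto_const_mul_atTop_of_pos hk).mpr tendsto_id)
        have := h2.const_mul C
        simpa using (tendsto_const_nhds.add this)
      exact ((Real.continuousAt_log (ne_of_gt hA)).tendsto.comp h1)
    have hinv : Tendsto (fun t : ℝ => (mu * t)⁻¹) atTop (nhds 0) := by
      apply Tendsto.inv_tendsto_atTop
      exact (tendsto_const_mul_atTop_of_pos hmu).mpr tendsto_id
    have hgtend : Tendsto g atTop (nhds (k / mu)) := by
      have := (tendsto_const_nhds (x := k / mu)).add ((hL.mul hinv))
      rw [show k / mu + Real.log A * 0 = k / mu by ring] at this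
      exact this.congr' (hgcong.mono fun t ht => ht.symm)
    -- conclude
    have hcob : IsCoboundedUnder (· ≤ ·) atTop f :=
      Filter.isCoboundedUnder_le_of_eventually_le atTop hfnonneg
    calc Filter.limsup f atTop ≤ Filter.limsup g atTop :=
          Filter.limsup_le_limsup hfg hcob hgtend.isBoundedUnder_le
    _ = k / mu := hgtend.limsup_eq
  -- take ε → 0
  apply le_of_forall_pos_le_add
  intro δ hδ
  have := key (δ * mu) (by positivity)
  calc Filter.limsup f atTop ≤ (lam + δ * mu) / mu := this
  _ = lam / mu + δ := by field_simp
end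

section
/- Let a2, gamma, h, c, betastar, k, sigma2 > 0. Then there exist constants M3, M4 > 0 such that for all x >= 0 and all S, I > 0, with beta(S,I) = betastar/(S + I + k): 2*S^2*( a2 - (1/(x + c) + h)*(S + I) ) - 2*beta(S,I)*I*S^2 + 2*gamma*I*S - ( a2 - (1/(x + c) + h)*(S + I) ) + beta(S,I)*I - gamma*I/S + sigma2^2*S^2 + (1/2)*sigma2^2 <= M3*(S^2 - ln S) + (1/2)*M3*(I^2 - ln I) + M4. -/
/-!
Bound every term of the drift from above, dropping the negative ones: the incidence term satisfies
`β(S, I) I ≤ β*`, the predation rate `1 / (x + c) + h` lies in `[0, 1 / c + h]`, and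
`2 γ I S ≤ γ (S² + I²)`. What remains is a quadratic `A y² + B y` in each of `S` and `I` plus a
constant, and `y² - log y ≥ (y² + 1) / 2` dominates `y²` and `y` alike.
-/

open Real

lemma sq_add_one_le_two_mul_sq_sub_log {y : ℝ} (hy : 0 < y) :
    y ^ 2 + 1 ≤ 2 * (y ^ 2 - log y) := by
  nlinarith [log_le_sub_one_of_pos hy, sq_nonneg (y - 1)]

lemma mul_sq_add_mul_le_mul_sq_sub_log {A B M y : ℝ} (hA : 0 ≤ A) (hB : 0 ≤ B)
    (hM : 2 * A + B ≤ M) (hy : 0 < y) :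
    A * y ^ 2 + B * y ≤ M * (y ^ 2 - log y) := by
  have hV := sq_add_one_le_two_mul_sq_sub_log hy
  have hy_le : y ≤ (y ^ 2 + 1) / 2 := by nlinarith [sq_nonneg (y - 1)]
  calc A * y ^ 2 + B * y ≤ (2 * A + B) * (y ^ 2 - log y) := by nlinarith
    _ ≤ M * (y ^ 2 - log y) := by gcongr; nlinarith

lemma div_mul_le_of_le {b D I : ℝ} (hb : 0 ≤ b) (hD : 0 < D) (hI : I ≤ D) :
    b / D * I ≤ b := by
  rw [div_mul_eq_mul_div, div_le_iff₀ hD]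
  exact mul_le_mul_of_nonneg_left hI hb

lemma drift_le_quadratic {a2 gamma u L b betastar s S I : ℝ} (ha2 : 0 ≤ a2)
    (hgamma : 0 ≤ gamma) (hu : 0 ≤ u) (huL : u ≤ L) (hb : 0 ≤ b) (hbI : b * I ≤ betastar)
    (hS : 0 < S) (hI : 0 < I) :
    2 * S ^ 2 * (a2 - u * (S + I)) - 2 * b * I * S ^ 2 + 2 * gamma * I * S
        - (a2 - u * (S + I)) + b * I - gamma * I / S + s * S ^ 2 + (1 / 2) * s
      ≤ (2 * a2 + gamma + s) * S ^ 2 + L * S + (gamma * I ^ 2 + L * I)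
        + (betastar + (1 / 2) * s) := by
  have hpred : 0 ≤ u * (S + I) * S ^ 2 := by positivity
  have hinf : 0 ≤ b * I * S ^ 2 := by positivity
  have hrec : 0 ≤ gamma * I / S := by positivity
  have hcross : 2 * gamma * I * S ≤ gamma * S ^ 2 + gamma * I ^ 2 := by
    nlinarith [mul_nonneg hgamma (sq_nonneg (S - I))]
  have hrate : u * (S + I) ≤ L * (S + I) := by gcongr
  nlinarith

theorem stmt_17_general (a2 gamma h c betastar k sigma2 : ℝ) (ha2 : 0 < a2)
    (hgamma : 0 < gamma) (hh : 0 < h) (hc : 0 < c) (hbetastar : 0 < betastar)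
    (hk : 0 < k) :
    ∃ M3 M4 : ℝ, 0 < M3 ∧ 0 < M4 ∧ ∀ x S I : ℝ, 0 ≤ x → 0 < S → 0 < I →
      2 * S ^ 2 * (a2 - (1 / (x + c) + h) * (S + I))
        - 2 * (betastar / (S + I + k)) * I * S ^ 2 + 2 * gamma * I * S
        - (a2 - (1 / (x + c) + h) * (S + I))
        + (betastar / (S + I + k)) * I - gamma * I / S
        + sigma2 ^ 2 * S ^ 2 + (1 / 2) * sigma2 ^ 2
      ≤ M3 * (S ^ 2 - Real.log S) + (1 / 2) * M3 * (I ^ 2 - Real.log I) + M4 := by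
  set L := 1 / c + h
  refine ⟨4 * a2 + 4 * gamma + 2 * sigma2 ^ 2 + 2 * L, betastar + (1 / 2) * sigma2 ^ 2,
    by positivity, by positivity, fun x S I hx hS hI => ?_⟩
  have hL : 0 < L := by positivity
  have hrate : 1 / (x + c) + h ≤ L :=
    add_le_add_left (one_div_le_one_div_of_le hc (by linarith)) h
  have hincidence : betastar / (S + I + k) * I ≤ betastar :=
    div_mul_le_of_le hbetastar.le (by positivity) (by linarith)
  have hdrift := drift_le_quadratic (s := sigma2 ^ 2) ha2.le hgamma.le (by positivity) hrate
    (by positivity) hincidence hS hI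
  have hVS := mul_sq_add_mul_le_mul_sq_sub_log (A := 2 * a2 + gamma + sigma2 ^ 2) (B := L)
    (M := 4 * a2 + 4 * gamma + 2 * sigma2 ^ 2 + 2 * L) (by positivity) (by positivity)
    (by linarith) hS
  have hVI := mul_sq_add_mul_le_mul_sq_sub_log (A := gamma) (B := L)
    (M := (1 / 2) * (4 * a2 + 4 * gamma + 2 * sigma2 ^ 2 + 2 * L)) hgamma.le (by positivity)
    (by nlinarith [sq_nonneg sigma2]) hI
  linarith

theorem stmt_17 (a2 gamma h c betastar k sigma2 : ℝ) (ha2 : 0 < a2)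
    (hgamma : 0 < gamma) (hh : 0 < h) (hc : 0 < c) (hbetastar : 0 < betastar)
    (hk : 0 < k) (hsigma2 : 0 < sigma2) :
    ∃ M3 M4 : ℝ, 0 < M3 ∧ 0 < M4 ∧ ∀ x S I : ℝ, 0 ≤ x → 0 < S → 0 < I →
      2 * S ^ 2 * (a2 - (1 / (x + c) + h) * (S + I))
        - 2 * (betastar / (S + I + k)) * I * S ^ 2 + 2 * gamma * I * S
        - (a2 - (1 / (x + c) + h) * (S + I))
        + (betastar / (S + I + k)) * I - gamma * I / S
        + sigma2 ^ 2 * S ^ 2 + (1 / 2) * sigma2 ^ 2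
      ≤ M3 * (S ^ 2 - Real.log S) + (1 / 2) * M3 * (I ^ 2 - Real.log I) + M4 :=
  stmt_17_general a2 gamma h c betastar k sigma2 ha2 hgamma hh hc hbetastar hk
end
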